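/- Let β>1 and d>0. For every μ with 0<μ<min(β−1,1) there exists a constant c=c(β,d,μ)<∞ such that, for every probability distribution (p_k) on ℕ satisfying the tail condition H(β,d), h_μ(s) ≤ c for every s∈[0,1). If β>2, the same conclusion also holds for μ=1. -/

import Mathlib

/-!
With `A = 1 - f(s)` and `B = m (1 - s)`, Abel summation against the tails gives
`A = (1 - s) ∑ q_j s^j ≥ q_0 (1 - s)` and `B - A = (1 - s) ∑ q_j (1 - s^j)`.
Since `1 - s^j ≤ min(1, j (1 - s)) ≤ (j (1 - s))^μ`, the tail condition bounds the latter by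
`d q_0 min(m, 1) (1 - s)^(1+μ) ∑ j^(μ-β)`, a convergent series because `μ + 1 < β`.
Concavity of `x ↦ x^μ` gives `A^(-μ) - B^(-μ) ≤ μ (B - A) / (A B^μ)`, and the denominator is at
least `q_0 m^μ (1 - s)^(1+μ) ≥ q_0 min(m, 1) (1 - s)^(1+μ)`, so everything but `d ∑ j^(μ-β)`
cancels.
-/

open Set Filter

noncomputable section

/-- Probability generating function of a distribution `a` on ℕ. -/
def pgf (a : ℕ → ℝ) (s : ℝ) : ℝ := ∑' k : ℕ, a k * s ^ k

/-- Mean of a distribution `a` on ℕ. -/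
def pmfMean (a : ℕ → ℝ) : ℝ := ∑' k : ℕ, (k : ℝ) * a k

/-- Tail `q_k = ∑_{j > k} a_j` of a distribution `a` on ℕ. -/
def tailAt (a : ℕ → ℝ) (k : ℕ) : ℝ := ∑' j : ℕ, if k < j then a j else 0

/-- `a` is a probability distribution on ℕ with finite positive mean. -/
def IsOffspring (a : ℕ → ℝ) : Prop :=
  (∀ k, 0 ≤ a k) ∧ HasSum a 1 ∧ Summable (fun k : ℕ => (k : ℝ) * a k) ∧ 0 < pmfMean a

/-- Tail condition `H(β,d)`: `q_k ≤ d·q_0·min(m,1)·k^{-β}` for all `k ≥ 1`. -/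
def TailCond (β d : ℝ) (a : ℕ → ℝ) : Prop :=
  ∀ k : ℕ, 1 ≤ k → tailAt a k ≤ d * tailAt a 0 * min (pmfMean a) 1 * (k : ℝ) ^ (-β)

/-- `h_μ(s) = (1-f(s))^{-μ} - (m(1-s))^{-μ}`. -/
def hmu (μ : ℝ) (a : ℕ → ℝ) (s : ℝ) : ℝ :=
  (1 - pgf a s) ^ (-μ) - (pmfMean a * (1 - s)) ^ (-μ)

theorem hasSum_mul_sub_mul_tailAt {a c : ℕ → ℝ} (ha : ∀ k, 0 ≤ a k) (hc : Monotone c)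
    (hc0 : c 0 = 0) (hac : Summable fun k => a k * c k) :
    HasSum (fun j => (c (j + 1) - c j) * tailAt a j) (∑' k, a k * c k) := by
  set F : ℕ × ℕ → ℝ := fun p => if p.2 < p.1 then a p.1 * (c (p.2 + 1) - c p.2) else 0
  have hF0 : 0 ≤ F := fun p => by
    dsimp only [F]
    split_ifs
    exacts [mul_nonneg (ha _) (sub_nonneg.2 (hc (Nat.le_succ _))), le_rfl]
  have hrow (k : ℕ) : HasSum (fun j => F (k, j)) (a k * c k) := by
    have h := hasSum_sum_of_ne_finset_zero (L := SummationFilter.unconditional ℕ)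
      (f := fun j => F (k, j)) (s := Finset.range k) (fun j hj => if_neg (by simpa using hj))
    convert h using 1
    dsimp only [F]
    rw [Finset.sum_congr rfl fun j hj => if_pos (Finset.mem_range.1 hj), ← Finset.mul_sum,
      Finset.sum_range_sub, hc0, sub_zero]
  have hFs : Summable F := (summable_prod_of_nonneg hF0).2
    ⟨fun k => (hrow k).summable, by simpa only [(hrow _).tsum_eq] using hac⟩
  have hF : HasSum (F ∘ Equiv.prodComm ℕ ℕ) (∑' k, a k * c k) := by
    rw [Equiv.hasSum_iff, (hFs.hasSum.prod_fiberwise hrow).tsum_eq]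
    exact hFs.hasSum
  refine hF.prod_fiberwise fun j => ?_
  have hcol : (fun k => (F ∘ Equiv.prodComm ℕ ℕ) (j, k)) =
      fun k => (c (j + 1) - c j) * if j < k then a k else 0 := by
    ext k
    by_cases h : j < k <;> simp [F, h, mul_comm]
  rw [tailAt, ← tsum_mul_left, ← hcol]
  exact (hF.summable.comp_injective (Prod.mk_right_injective j)).hasSum

section Tails

variable {a : ℕ → ℝ}

theorem tailAt_nonneg (ha : ∀ k, 0 ≤ a k) (k : ℕ) : 0 ≤ tailAt a k :=
  tsum_nonneg fun j => by split_ifs <;> simp [ha j]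

theorem hasSum_tailAt (ha : ∀ k, 0 ≤ a k) (hm : Summable fun k : ℕ => (k : ℝ) * a k) :
    HasSum (tailAt a) (pmfMean a) := by
  have h := hasSum_mul_sub_mul_tailAt (c := fun k : ℕ => (k : ℝ)) ha Nat.mono_cast Nat.cast_zero
    (by simpa only [mul_comm] using hm)
  simpa [pmfMean, mul_comm] using h

theorem hasSum_pow_mul_tailAt {s : ℝ} (ha : ∀ k, 0 ≤ a k) (h1 : HasSum a 1) (hs0 : 0 ≤ s)
    (hs1 : s ≤ 1) : HasSum (fun j => (1 - s) * (s ^ j * tailAt a j)) (1 - pgf a s) := by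
  have hpow : Summable fun k => a k * s ^ k :=
    Summable.of_nonneg_of_le (fun k => mul_nonneg (ha k) (pow_nonneg hs0 k))
      (fun k => mul_le_of_le_one_right (ha k) (pow_le_one₀ hs0 hs1)) h1.summable
  have hA : HasSum (fun k => a k * (1 - s ^ k)) (1 - pgf a s) := by
    simpa only [mul_sub, mul_one, pgf] using h1.sub hpow.hasSum
  have h := hasSum_mul_sub_mul_tailAt ha
    (fun i j hij => sub_le_sub_left (pow_le_pow_of_le_one hs0 hs1 hij) 1) (by simp) hA.summable
  rw [hA.tsum_eq] at h
  convert h using 2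
  ring

theorem mul_one_sub_le_one_sub_pgf {s : ℝ} (ha : ∀ k, 0 ≤ a k) (h1 : HasSum a 1) (hs0 : 0 ≤ s)
    (hs1 : s ≤ 1) : tailAt a 0 * (1 - s) ≤ 1 - pgf a s := by
  have h := le_hasSum (hasSum_pow_mul_tailAt ha h1 hs0 hs1) 0 fun j _ =>
    mul_nonneg (sub_nonneg.2 hs1) (mul_nonneg (pow_nonneg hs0 j) (tailAt_nonneg ha j))
  simpa [mul_comm] using h

theorem hasSum_one_sub_pow_mul_tailAt {s : ℝ} (ha : ∀ k, 0 ≤ a k) (h1 : HasSum a 1)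
    (hm : Summable fun k : ℕ => (k : ℝ) * a k) (hs0 : 0 ≤ s) (hs1 : s ≤ 1) :
    HasSum (fun j => (1 - s) * ((1 - s ^ j) * tailAt a j))
      (pmfMean a * (1 - s) - (1 - pgf a s)) := by
  have h := ((hasSum_tailAt ha hm).mul_right (1 - s)).sub (hasSum_pow_mul_tailAt ha h1 hs0 hs1)
  convert h using 1
  · rfl
  · ext j; ring

end Tails

theorem min_one_le_rpow {x μ : ℝ} (hx : 0 ≤ x) (hμ0 : 0 ≤ μ) (hμ1 : μ ≤ 1) : min 1 x ≤ x ^ μ := by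
  rcases le_total x 1 with h | h
  · exact (min_le_right _ _).trans (Real.self_le_rpow_of_le_one hx h hμ1)
  · exact (min_le_left _ _).trans (Real.one_le_rpow h hμ0)

theorem one_sub_pow_le_rpow {s μ : ℝ} (hs0 : 0 ≤ s) (hs1 : s ≤ 1) (hμ0 : 0 ≤ μ) (hμ1 : μ ≤ 1)
    (j : ℕ) : 1 - s ^ j ≤ (j * (1 - s)) ^ μ := by
  have hbern := one_add_mul_le_pow (show -2 ≤ s - 1 by linarith) j
  rw [add_sub_cancel] at hbern
  refine le_trans (le_min ?_ ?_) (min_one_le_rpow (by positivity) hμ0 hμ1)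
  · linarith [pow_nonneg hs0 j]
  · linarith

theorem rpow_neg_sub_rpow_neg_le {A B μ : ℝ} (hA : 0 < A) (hAB : A ≤ B) (hμ0 : 0 ≤ μ)
    (hμ1 : μ ≤ 1) : A ^ (-μ) - B ^ (-μ) ≤ μ * (B - A) / (A * B ^ μ) := by
  have hAμ : 0 < A ^ μ := Real.rpow_pos_of_pos hA μ
  have hBμ : 0 < B ^ μ := Real.rpow_pos_of_pos (hA.trans_le hAB) μ
  have hconc : B ^ μ ≤ A ^ μ * (1 + μ * ((B - A) / A)) := by
    have h := rpow_one_add_le_one_add_mul_self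
      (show -1 ≤ (B - A) / A by linarith [div_nonneg (sub_nonneg.2 hAB) hA.le]) hμ0 hμ1
    calc B ^ μ = (A * (1 + (B - A) / A)) ^ μ := by field_simp; ring_nf
      _ = A ^ μ * (1 + (B - A) / A) ^ μ := Real.mul_rpow hA.le (by positivity)
      _ ≤ A ^ μ * (1 + μ * ((B - A) / A)) := by gcongr
  have hconc' : A * (B ^ μ - A ^ μ) ≤ μ * (B - A) * A ^ μ := by
    have := mul_le_mul_of_nonneg_left hconc hA.le
    field_simp at this
    linarith
  rw [Real.rpow_neg hA.le, Real.rpow_neg (hA.trans_le hAB).le, inv_sub_inv hAμ.ne' hBμ.ne',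
    div_le_div_iff₀ (by positivity) (by positivity)]
  nlinarith [mul_le_mul_of_nonneg_left hconc' hBμ.le]

section Bound

variable {a : ℕ → ℝ} {β d μ s : ℝ}

theorem one_sub_pow_mul_tailAt_le (ha : ∀ k, 0 ≤ a k) (hH : TailCond β d a) (hs0 : 0 ≤ s)
    (hs1 : s ≤ 1) (hμ0 : 0 ≤ μ) (hμ1 : μ ≤ 1) (hμβ : μ ≠ β) (j : ℕ) :
    (1 - s ^ j) * tailAt a j ≤
      (1 - s) ^ μ * (d * tailAt a 0 * min (pmfMean a) 1) * (j : ℝ) ^ (μ - β) := by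
  rcases Nat.eq_zero_or_pos j with rfl | hj
  · simp [Real.zero_rpow (sub_ne_zero.2 hμβ)]
  have hj' : (0 : ℝ) < j := Nat.cast_pos.2 hj
  calc (1 - s ^ j) * tailAt a j
      ≤ (j * (1 - s)) ^ μ * (d * tailAt a 0 * min (pmfMean a) 1 * (j : ℝ) ^ (-β)) :=
        mul_le_mul (one_sub_pow_le_rpow hs0 hs1 hμ0 hμ1 j) (hH j hj) (tailAt_nonneg ha j)
          (by positivity)
    _ = (1 - s) ^ μ * (d * tailAt a 0 * min (pmfMean a) 1) * ((j : ℝ) ^ μ * (j : ℝ) ^ (-β)) := by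
        rw [Real.mul_rpow hj'.le (by linarith)]; ring
    _ = (1 - s) ^ μ * (d * tailAt a 0 * min (pmfMean a) 1) * (j : ℝ) ^ (μ - β) := by
        rw [← Real.rpow_add hj', ← sub_eq_add_neg]

theorem hmu_le_mul_tsum (hd : 0 ≤ d) (hμ0 : 0 < μ) (hμ1 : μ ≤ 1) (hμβ : μ + 1 < β)
    (ha : IsOffspring a) (hq0 : 0 < tailAt a 0) (hH : TailCond β d a) (hs0 : 0 ≤ s)
    (hs1 : s < 1) : hmu μ a s ≤ d * ∑' j : ℕ, (j : ℝ) ^ (μ - β) := by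
  obtain ⟨ha, h1, hsm, hm⟩ := ha
  set m := pmfMean a
  set A := 1 - pgf a s
  set Z := ∑' j : ℕ, (j : ℝ) ^ (μ - β)
  have hs : 0 < 1 - s := sub_pos.2 hs1
  have hZ : HasSum (fun j : ℕ => (j : ℝ) ^ (μ - β)) Z :=
    (Real.summable_nat_rpow.2 (by linarith)).hasSum
  have hdiff := hasSum_one_sub_pow_mul_tailAt ha h1 hsm hs0 hs1.le
  have hdiff_le : m * (1 - s) - A ≤ (1 - s) * ((1 - s) ^ μ * (d * tailAt a 0 * min m 1) * Z) :=
    hasSum_le (fun j => mul_le_mul_of_nonneg_left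
      (one_sub_pow_mul_tailAt_le ha hH hs0 hs1.le hμ0.le hμ1 (by linarith) j) hs.le) hdiff
      ((hZ.mul_left _).mul_left _)
  have hAB : A ≤ m * (1 - s) := sub_nonneg.1 <| hdiff.nonneg fun j => mul_nonneg hs.le
    (mul_nonneg (sub_nonneg.2 (pow_le_one₀ hs0 hs1.le)) (tailAt_nonneg ha j))
  have hA_ge : tailAt a 0 * (1 - s) ≤ A := mul_one_sub_le_one_sub_pgf ha h1 hs0 hs1.le
  have hA : 0 < A := (mul_pos hq0 hs).trans_le hA_ge
  have hZ0 : 0 ≤ Z := hZ.nonneg fun j => by positivity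
  calc hmu μ a s ≤ μ * (m * (1 - s) - A) / (A * (m * (1 - s)) ^ μ) :=
        rpow_neg_sub_rpow_neg_le hA hAB hμ0.le hμ1
    _ ≤ d * Z := by
      rw [div_le_iff₀ (by positivity)]
      calc μ * (m * (1 - s) - A)
          ≤ 1 * ((1 - s) * ((1 - s) ^ μ * (d * tailAt a 0 * min m 1) * Z)) :=
            mul_le_mul hμ1 hdiff_le (sub_nonneg.2 hAB) zero_le_one
        _ = d * Z * ((tailAt a 0 * (1 - s)) * (min m 1 * (1 - s) ^ μ)) := by ring
        _ ≤ d * Z * (A * (m * (1 - s)) ^ μ) := by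
          rw [Real.mul_rpow hm.le hs.le, min_comm]
          gcongr
          exact min_one_le_rpow hm.le hμ0.le hμ1

end Bound

theorem exists_hmu_le {β d μ : ℝ} (hd : 0 < d) (hμ0 : 0 < μ) (hμ1 : μ ≤ 1) (hμβ : μ + 1 < β) :
    ∃ c : ℝ, 0 < c ∧ ∀ a : ℕ → ℝ, IsOffspring a → 0 < tailAt a 0 → TailCond β d a →
      ∀ s ∈ Ico (0 : ℝ) 1, hmu μ a s ≤ c := by
  have hZ : 0 < ∑' j : ℕ, (j : ℝ) ^ (μ - β) :=
    (Real.summable_nat_rpow.2 (by linarith)).tsum_pos (fun j => by positivity) 1 (by simp)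
  exact ⟨_, mul_pos hd hZ, fun a ha hq0 hH s hs =>
    hmu_le_mul_tsum hd.le hμ0 hμ1 hμβ ha hq0 hH hs.1 hs.2⟩

theorem hmu_bounded_general (β d : ℝ) (hd : 0 < d) :
    (∀ μ : ℝ, 0 < μ → μ < min (β - 1) 1 →
      ∃ c : ℝ, 0 < c ∧ ∀ a : ℕ → ℝ, IsOffspring a → 0 < tailAt a 0 → TailCond β d a →
        ∀ s ∈ Ico (0 : ℝ) 1, hmu μ a s ≤ c) ∧
    (2 < β →
      ∃ c : ℝ, 0 < c ∧ ∀ a : ℕ → ℝ, IsOffspring a → 0 < tailAt a 0 → TailCond β d a →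
        ∀ s ∈ Ico (0 : ℝ) 1, hmu 1 a s ≤ c) := by
  refine ⟨fun μ hμ0 hμ => ?_, fun hβ => exists_hmu_le hd one_pos le_rfl (by linarith)⟩
  obtain ⟨hμβ, hμ1⟩ := lt_min_iff.1 hμ
  exact exists_hmu_le hd hμ0 hμ1.le (by linarith)

/-- for `β > 1`, `d > 0` and `0 < μ < min(β-1,1)` there is a constant
`c = c(β,d,μ) < ∞` with `h_μ(s) ≤ c` on `[0,1)` for every distribution satisfying `H(β,d)`;
for `β > 2` the same holds for `μ = 1`. -/
theorem hmu_bounded (β d : ℝ) (hβ : 1 < β) (hd : 0 < d) :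
    (∀ μ : ℝ, 0 < μ → μ < min (β - 1) 1 →
      ∃ c : ℝ, 0 < c ∧ ∀ a : ℕ → ℝ, IsOffspring a → 0 < tailAt a 0 → TailCond β d a →
        ∀ s ∈ Ico (0 : ℝ) 1, hmu μ a s ≤ c) ∧
    (2 < β →
      ∃ c : ℝ, 0 < c ∧ ∀ a : ℕ → ℝ, IsOffspring a → 0 < tailAt a 0 → TailCond β d a →
        ∀ s ∈ Ico (0 : ℝ) 1, hmu 1 a s ≤ c) :=
  hmu_bounded_general β d hd
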